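/- arXiv:2412.17668 — 3 statements merged into one kernel-verified Lean document; each statement's English description precedes it below -/
import Mathlib

section
/- For every natural number n ≥ 18, the game chromatic number of the 4×n grid graph satisfies χ_g(P_4 □ P_n) ≥ 4; that is, Bob has a winning strategy in the 3-coloring game on P_4 □ P_n. -/
open SimpleGraph

/-- A move coloring vertex `v` with color `col` is valid for the partial coloring `c`
if `v` is uncolored and no neighbor of `v` already has color `col`. -/
def validMove {V : Type*} (G : SimpleGraph V) {k : ℕ} (c : V → Option (Fin k))
    (v : V) (col : Fin k) : Prop :=
  c v = none ∧ ∀ u, G.Adj u v → c u ≠ some col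

/-- All vertices are colored. -/
def allColored {V : Type*} {k : ℕ} (c : V → Option (Fin k)) : Prop :=
  ∀ v, c v ≠ none

/-- `AliceWins G k turn c` : starting from the partial proper coloring `c` of `G`,
with `turn = true` meaning that it is Alice's move (`turn = false` : Bob's move),
Alice can force the `k`-coloring game to end with every vertex colored. -/
inductive AliceWins {V : Type*} [DecidableEq V] (G : SimpleGraph V) (k : ℕ) :
    Bool → (V → Option (Fin k)) → Prop
  | finished (turn : Bool) (c : V → Option (Fin k)) (h : allColored c) :
      AliceWins G k turn c
  | aliceMove (c : V → Option (Fin k)) (v : V) (col : Fin k)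
      (hm : validMove G c v col)
      (h : AliceWins G k false (Function.update c v (some col))) :
      AliceWins G k true c
  | bobTurn (c : V → Option (Fin k))
      (hne : ∃ v col, validMove G c v col)
      (h : ∀ v col, validMove G c v col →
        AliceWins G k true (Function.update c v (some col))) :
      AliceWins G k false c

/-- `BobWins G k turn c` : starting from the partial proper coloring `c` of `G`,
with `turn = true` meaning that it is Alice's move (`turn = false` : Bob's move),
Bob can force the `k`-coloring game to end with some vertex left uncolored. -/
inductive BobWins {V : Type*} [DecidableEq V] (G : SimpleGraph V) (k : ℕ) :
    Bool → (V → Option (Fin k)) → Prop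
  | aliceTurn (c : V → Option (Fin k)) (h0 : ¬ allColored c)
      (h : ∀ v col, validMove G c v col →
        BobWins G k false (Function.update c v (some col))) :
      BobWins G k true c
  | bobMove (c : V → Option (Fin k)) (v : V) (col : Fin k)
      (hm : validMove G c v col)
      (h : BobWins G k true (Function.update c v (some col))) :
      BobWins G k false c
  | bobStuck (c : V → Option (Fin k)) (h0 : ¬ allColored c)
      (h : ∀ v col, ¬ validMove G c v col) :
      BobWins G k false c

/-- The game chromatic number: the least `k` such that Alice has a winning strategy
in the `k`-coloring game on `G` (Alice moves first), starting from the empty coloring. -/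
noncomputable def gameChromaticNumber {V : Type*} [DecidableEq V] (G : SimpleGraph V) : ℕ :=
  sInf {k | AliceWins G k true (fun _ => none)}

/-- The Bob-start game chromatic number: the least `k` such that Alice has a winning
strategy in the `k`-coloring game on `G` in which Bob moves first. -/
noncomputable def bobStartGameChromaticNumber {V : Type*} [DecidableEq V]
    (G : SimpleGraph V) : ℕ :=
  sInf {k | AliceWins G k false (fun _ => none)}

/-!
With three colours Bob answers Alice's first move at `v` (colour `x`) on a diagonal
neighbour `b` of `v`, with a second colour `y`. The two common neighbours `t₁`, `t₂` of
`v` and `b` now see both `x` and `y`, and each has an uncoloured neighbour `wᵢ` that Bob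
could colour with the third colour `z`, leaving `tᵢ` without a colour. In the `4 × n`
grid these two threats can be chosen so far apart that one move of Alice spoils at most
one of them, so Bob carries out the other. With fewer colours Bob wins even faster, and
Alice wins once there are more colours than any degree, so the infimum defining the game
chromatic number is attained and is at least `4`.
-/

open Function Finset

section Game

variable {V : Type*} {G : SimpleGraph V} {k : ℕ}

def uncolored [Fintype V] (c : V → Option (Fin k)) : Finset V :=
  {v | c v = none}

theorem exists_validMove_of_degree_lt {c : V → Option (Fin k)} {v : V}
    [Fintype (G.neighborSet v)] (hv : c v = none) (hdeg : G.degree v < k) :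
    ∃ col, validMove G c v col := by
  have hcard : #((G.neighborFinset v).image c) < #((univ : Finset (Fin k)).map .some) := by
    simpa using card_image_le.trans_lt hdeg
  obtain ⟨_, hmem, hnot⟩ := exists_mem_notMem_of_card_lt_card hcard
  obtain ⟨col, -, rfl⟩ := mem_map.1 hmem
  exact ⟨col, hv, fun u hu hcu => hnot (mem_image.2 ⟨u, by simpa using hu.symm, hcu⟩)⟩

variable [DecidableEq V]

theorem AliceWins.not_bobWins {turn : Bool} {c : V → Option (Fin k)}
    (hA : AliceWins G k turn c) : ¬ BobWins G k turn c := by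
  induction hA with
  | finished turn c hall =>
    rintro (⟨c, hnot, -⟩ | ⟨c, v, col, hm, -⟩ | ⟨c, hnot, -⟩)
    · exact hnot hall
    · exact hall v hm.1
    · exact hnot hall
  | aliceMove c v col hm _ ih =>
    rintro ⟨c, -, hB⟩
    exact ih (hB v col hm)
  | bobTurn c hne _ ih =>
    intro hB
    cases hB with
    | bobMove c v col hm hB => exact ih v col hm hB
    | bobStuck c _ hstuck =>
      obtain ⟨v, col, hm⟩ := hne
      exact hstuck v col hm

variable [Fintype V]

theorem card_uncolored_update_lt {c : V → Option (Fin k)} {v : V} (hv : c v = none)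
    (col : Fin k) : #(uncolored (update c v (some col))) < #(uncolored c) := by
  have : uncolored (update c v (some col)) = (uncolored c).erase v := by
    ext u
    by_cases hu : u = v <;> simp [uncolored, hu]
  rw [this]
  exact card_erase_lt_of_mem (by simpa [uncolored])

theorem BobWins.of_dead {c : V → Option (Fin k)} {t : V} (ht : c t = none)
    (hdead : ∀ col, ∃ u, G.Adj u t ∧ c u = some col) (turn : Bool) :
    BobWins G k turn c := by
  have hstep (v col) (hm : validMove G c v col) (turn' : Bool) :
      BobWins G k turn' (update c v (some col)) := by
    have hvt : v ≠ t := by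
      rintro rfl
      obtain ⟨u, hu, hcu⟩ := hdead col
      exact hm.2 u hu hcu
    have := card_uncolored_update_lt hm.1 col
    refine BobWins.of_dead (by rwa [update_of_ne hvt.symm]) (fun col' => ?_) turn'
    obtain ⟨u, hu, hcu⟩ := hdead col'
    have huv : u ≠ v := by rintro rfl; simp [hm.1] at hcu
    exact ⟨u, hu, by rwa [update_of_ne huv]⟩
  have hnot : ¬ allColored c := fun h => h t ht
  cases turn with
  | true => exact .aliceTurn c hnot fun v col hm => hstep v col hm false
  | false =>
    by_cases hex : ∃ v col, validMove G c v col
    · obtain ⟨v, col, hm⟩ := hex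
      exact .bobMove c v col hm (hstep v col hm true)
    · exact .bobStuck c hnot fun v col hm => hex ⟨v, col, hm⟩
termination_by #(uncolored c)

theorem AliceWins.of_forall_degree_lt [DecidableRel G.Adj] (hdeg : ∀ v, G.degree v < k)
    (turn : Bool) (c : V → Option (Fin k)) : AliceWins G k turn c := by
  by_cases hall : allColored c
  · exact .finished turn c hall
  obtain ⟨v, hv⟩ : ∃ v, c v = none := by simpa [allColored] using hall
  obtain ⟨col, hm⟩ := exists_validMove_of_degree_lt hv (hdeg v)
  have hstep (v col) (hm : validMove G c v col) (turn' : Bool) :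
      AliceWins G k turn' (update c v (some col)) :=
    have := card_uncolored_update_lt hm.1 col
    AliceWins.of_forall_degree_lt hdeg turn' _
  cases turn with
  | true => exact .aliceMove c v col hm (hstep v col hm false)
  | false => exact .bobTurn c ⟨v, col, hm⟩ fun v' col' hm' => hstep v' col' hm' true
termination_by #(uncolored c)

theorem le_gameChromaticNumber (h : ∀ j < k, BobWins G j true fun _ => none) :
    k ≤ gameChromaticNumber G := by
  classical
  have hne : {j | AliceWins G j true fun _ => none}.Nonempty :=
    ⟨_, AliceWins.of_forall_degree_lt G.degree_lt_card_verts true _⟩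
  by_contra! hlt
  exact (Nat.sInf_mem hne).not_bobWins (h _ hlt)

end Game

section Threats

variable {V : Type*} {G : SimpleGraph V} {k : ℕ}

/-- Bob threatens to leave `t` without a colour by colouring its neighbour `w` with `z`. -/
structure IsThreat (G : SimpleGraph V) (c : V → Option (Fin k)) (t w : V) (z : Fin k) :
    Prop where
  target_eq_none : c t = none
  eq_none : c w = none
  adj : G.Adj w t
  covers : ∀ col ≠ z, ∃ u, G.Adj u t ∧ c u = some col
  free : ∀ u, G.Adj u w → c u ≠ some z

/-- The vertices on which a move can spoil the threat at `t` through `w`. -/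
def threatZone (G : SimpleGraph V) (t w : V) : Set V :=
  insert t (insert w (G.neighborSet w))

structure IsFork (G : SimpleGraph V) (v b t₁ w₁ t₂ w₂ : V) : Prop where
  ne : v ≠ b
  v_adj_t₁ : G.Adj v t₁
  b_adj_t₁ : G.Adj b t₁
  v_adj_t₂ : G.Adj v t₂
  b_adj_t₂ : G.Adj b t₂
  w₁_adj_t₁ : G.Adj w₁ t₁
  w₂_adj_t₂ : G.Adj w₂ t₂
  w₁_ne_v : w₁ ≠ v
  w₁_ne_b : w₁ ≠ b
  w₂_ne_v : w₂ ≠ v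
  w₂_ne_b : w₂ ≠ b
  disjoint : Disjoint (threatZone G t₁ w₁) (threatZone G t₂ w₂)

variable [DecidableEq V]

theorem eq_some_of_two_moves {v b u : V} {x y col : Fin k}
    (h : update (update (fun _ => none) v (some x)) b (some y) u = some col) :
    u = v ∧ col = x ∨ u = b ∧ col = y := by
  by_cases hub : u = b
  · simp_all
  · by_cases huv : u = v <;> simp_all

theorem isThreat_of_two_moves {v b t w : V} {x y z : Fin 3} (hxy : x ≠ y) (hxz : x ≠ z)
    (hyz : y ≠ z) (hvb : v ≠ b) (hvt : G.Adj v t) (hbt : G.Adj b t) (hwt : G.Adj w t)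
    (hwv : w ≠ v) (hwb : w ≠ b) :
    IsThreat G (update (update (fun _ => none) v (some x)) b (some y)) t w z := by
  refine ⟨by simp [hvt.ne.symm, hbt.ne.symm], by simp [hwv, hwb], hwt,
    fun col hcol => ?_, fun u _ hu => ?_⟩
  · obtain rfl | rfl : col = x ∨ col = y := by omega
    · exact ⟨v, hvt, by simp [hvb]⟩
    · exact ⟨b, hbt, by simp⟩
  · rcases eq_some_of_two_moves hu with ⟨-, rfl⟩ | ⟨-, rfl⟩ <;> simp_all

theorem BobWins.of_reply {v b : V} {x y : Fin k} (hvb : v ≠ b) (hxy : x ≠ y)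
    (h : BobWins G k true (update (update (fun _ => none) v (some x)) b (some y))) :
    BobWins G k false (update (fun _ => none) v (some x)) := by
  refine .bobMove _ b y ⟨by simp [hvb.symm], fun u _ hu => hxy ?_⟩ h
  by_cases huv : u = v <;> simp_all

theorem BobWins.of_forall_first_move [Nonempty V]
    (h : ∀ v x, BobWins G k false (update (fun _ => none) v (some x))) :
    BobWins G k true fun _ => none :=
  .aliceTurn _ (fun hall => hall (Classical.arbitrary V) rfl) fun v x _ => h v x

theorem IsThreat.update {c : V → Option (Fin k)} {t w v : V} {z : Fin k}
    (h : IsThreat G c t w z) (hv : c v = none) (hzone : v ∉ threatZone G t w) (col : Fin k) :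
    IsThreat G (update c v (some col)) t w z := by
  simp only [threatZone, Set.mem_insert_iff, SimpleGraph.mem_neighborSet, not_or] at hzone
  obtain ⟨hvt, hvw, hadj⟩ := hzone
  refine ⟨?_, ?_, h.adj, fun col' hcol' => ?_, fun u hu => ?_⟩
  · rw [update_of_ne (Ne.symm hvt), h.target_eq_none]
  · rw [update_of_ne (Ne.symm hvw), h.eq_none]
  · obtain ⟨u, hu, hcu⟩ := h.covers col' hcol'
    have huv : u ≠ v := by rintro rfl; simp [hv] at hcu
    exact ⟨u, hu, by rwa [update_of_ne huv]⟩
  · have huv : u ≠ v := by rintro rfl; exact hadj hu.symm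
    rw [update_of_ne huv]
    exact h.free u hu

variable [Fintype V]

theorem IsThreat.bobWins {c : V → Option (Fin k)} {t w : V} {z : Fin k}
    (h : IsThreat G c t w z) : BobWins G k false c := by
  refine .bobMove c w z ⟨h.eq_none, h.free⟩ (BobWins.of_dead (t := t) ?_ (fun col => ?_) true)
  · rw [update_of_ne (G.ne_of_adj h.adj).symm, h.target_eq_none]
  by_cases hcol : col = z
  · exact ⟨w, h.adj, by rw [update_self, hcol]⟩
  obtain ⟨u, hu, hcu⟩ := h.covers col hcol
  have huw : u ≠ w := by rintro rfl; simp [h.eq_none] at hcu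
  exact ⟨u, hu, by rwa [update_of_ne huw]⟩

theorem bobWins_of_isThreat_of_isThreat {c : V → Option (Fin k)} {t₁ w₁ t₂ w₂ : V}
    {z₁ z₂ : Fin k} (h₁ : IsThreat G c t₁ w₁ z₁) (h₂ : IsThreat G c t₂ w₂ z₂)
    (hdisj : Disjoint (threatZone G t₁ w₁) (threatZone G t₂ w₂)) : BobWins G k true c := by
  refine .aliceTurn c (fun hall => hall t₁ h₁.target_eq_none) fun v col hm => ?_
  by_cases hv : v ∈ threatZone G t₁ w₁
  · exact (h₂.update hm.1 (hdisj.notMem_of_mem_left hv) col).bobWins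
  · exact (h₁.update hm.1 hv col).bobWins

theorem bobWins_zero [Nonempty V] : BobWins G 0 true fun _ => none :=
  .of_dead (t := Classical.arbitrary V) rfl (fun col => col.elim0) true

theorem bobWins_one [Nonempty V] (h : ∀ v, ∃ t, G.Adj v t) :
    BobWins G 1 true fun _ => none := by
  refine .of_forall_first_move fun v x => ?_
  obtain ⟨t, hvt⟩ := h v
  refine .of_dead (t := t) (by simp [hvt.ne.symm]) (fun col => ⟨v, hvt, ?_⟩) false
  simp [Subsingleton.elim col x]

theorem bobWins_two [Nonempty V] (h : ∀ v, ∃ b t, v ≠ b ∧ G.Adj v t ∧ G.Adj b t) :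
    BobWins G 2 true fun _ => none := by
  refine .of_forall_first_move fun v x => ?_
  obtain ⟨b, t, hvb, hvt, hbt⟩ := h v
  obtain ⟨y, hxy⟩ : ∃ y, x ≠ y := by revert x; decide
  refine .of_reply hvb hxy (.of_dead (t := t) (by simp [hvt.ne.symm, hbt.ne.symm]) ?_ true)
  intro col
  obtain rfl | rfl : col = x ∨ col = y := by omega
  · exact ⟨v, hvt, by simp [hvb]⟩
  · exact ⟨b, hbt, by simp⟩

theorem bobWins_three [Nonempty V]
    (h : ∀ v, ∃ b t₁ w₁ t₂ w₂, IsFork G v b t₁ w₁ t₂ w₂) : BobWins G 3 true fun _ => none := by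
  refine .of_forall_first_move fun v x => ?_
  obtain ⟨b, t₁, w₁, t₂, w₂, hf⟩ := h v
  obtain ⟨y, z, hxy, hxz, hyz⟩ : ∃ y z : Fin 3, x ≠ y ∧ x ≠ z ∧ y ≠ z := by
    revert x; decide
  exact .of_reply hf.ne hxy <| bobWins_of_isThreat_of_isThreat
    (isThreat_of_two_moves hxy hxz hyz hf.ne hf.v_adj_t₁ hf.b_adj_t₁ hf.w₁_adj_t₁
      hf.w₁_ne_v hf.w₁_ne_b)
    (isThreat_of_two_moves hxy hxz hyz hf.ne hf.v_adj_t₂ hf.b_adj_t₂ hf.w₂_adj_t₂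
      hf.w₂_ne_v hf.w₂_ne_b)
    hf.disjoint

end Threats

theorem exists_isFork_grid {n : ℕ} (hn : 4 ≤ n) (v : Fin 4 × Fin n) :
    ∃ b t₁ w₁ t₂ w₂, IsFork (pathGraph 4 □ pathGraph n) v b t₁ w₁ t₂ w₂ := by
  obtain ⟨⟨r, hr⟩, ⟨a, ha⟩⟩ := v
  obtain ⟨s, s', hs, hs', hss'⟩ : ∃ s s', s < n ∧ s' < n ∧
      (s = a + 1 ∧ s' = a + 2 ∨ s + 1 = a ∧ s' + 2 = a) := by
    by_cases h : a + 2 < n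
    · exact ⟨a + 1, a + 2, by omega, h, by omega⟩
    · exact ⟨a - 1, a - 2, by omega, by omega, by omega⟩
  -- Bob answers diagonally towards column `s`. The threat at `(r, s)` is completed from the
  -- far side of row `r`, or, for a border row, from column `s'` further along that row.
  interval_cases r
  on_goal 1 =>
    refine ⟨(1, ⟨s, hs⟩), (0, ⟨s, hs⟩), (0, ⟨s', hs'⟩), (1, ⟨a, ha⟩), (2, ⟨a, ha⟩), ?_⟩
  on_goal 2 =>
    refine ⟨(2, ⟨s, hs⟩), (1, ⟨s, hs⟩), (0, ⟨s, hs⟩), (2, ⟨a, ha⟩), (3, ⟨a, ha⟩), ?_⟩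
  on_goal 3 =>
    refine ⟨(1, ⟨s, hs⟩), (2, ⟨s, hs⟩), (3, ⟨s, hs⟩), (1, ⟨a, ha⟩), (0, ⟨a, ha⟩), ?_⟩
  on_goal 4 =>
    refine ⟨(2, ⟨s, hs⟩), (3, ⟨s, hs⟩), (3, ⟨s', hs'⟩), (2, ⟨a, ha⟩), (1, ⟨a, ha⟩), ?_⟩
  all_goals
    refine ⟨?_, ?_, ?_, ?_, ?_, ?_, ?_, ?_, ?_, ?_, ?_,
      Set.disjoint_left.2 fun ⟨⟨p, hp⟩, ⟨q, hq⟩⟩ h₁ h₂ => ?_⟩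
    all_goals simp [threatZone, boxProd_adj, pathGraph_adj, Fin.ext_iff] at * <;> omega

/-- For every `n ≥ 18`, the game chromatic number of the `4 × n` grid graph
`P₄ □ Pₙ` is at least `4`; that is, Bob has a winning strategy in the
`3`-coloring game (Alice moving first) on `P₄ □ Pₙ`. -/
theorem four_le_gameChromaticNumber_grid (n : ℕ) (hn : 18 ≤ n) :
    4 ≤ gameChromaticNumber (pathGraph 4 □ pathGraph n) ∧
      BobWins (pathGraph 4 □ pathGraph n) 3 true (fun _ => none) := by
  have : Nonempty (Fin 4 × Fin n) := ⟨(0, ⟨0, by omega⟩)⟩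
  have hfork := exists_isFork_grid (by omega : 4 ≤ n)
  refine ⟨le_gameChromaticNumber fun j hj => ?_, bobWins_three hfork⟩
  interval_cases j
  · exact bobWins_zero
  · refine bobWins_one fun v => ?_
    obtain ⟨_, t, _, _, _, hf⟩ := hfork v
    exact ⟨t, hf.v_adj_t₁⟩
  · refine bobWins_two fun v => ?_
    obtain ⟨b, t, _, _, _, hf⟩ := hfork v
    exact ⟨b, t, hf.ne, hf.v_adj_t₁, hf.b_adj_t₁⟩
  · exact bobWins_three hfork
end

section
/- For every natural number n ≥ 1, Alice has a winning strategy in the Bob-start 4-coloring game on the 4×n grid graph, i.e., χ_g^B(P_4 □ P_n) ≤ 4. (Her strategy: whenever Bob colors the vertex in row a of some column j with color c, Alice colors the vertex in row b of the same column j with |a − b| = 2 with the same color c.) -/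
open SimpleGraph

namespace GridGameAux

/-- The row involution `0 ↔ 2`, `1 ↔ 3`. -/
def σ4 (i : Fin 4) : Fin 4 := ⟨(i.val + 2) % 4, by omega⟩

lemma σ4_val (i : Fin 4) : (σ4 i).val = (i.val + 2) % 4 := rfl

lemma σ4_invol (i : Fin 4) : σ4 (σ4 i) = i := by
  have h := i.isLt
  apply Fin.ext
  rw [σ4_val, σ4_val]
  omega

lemma σ4_ne (i : Fin 4) : σ4 i ≠ i := by
  have h := i.isLt
  intro hc
  have := congrArg Fin.val hc
  rw [σ4_val] at this
  omega

variable {n : ℕ}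

/-- Mirror a vertex to its partner two rows away in the same column. -/
def S (n : ℕ) (v : Fin 4 × Fin n) : Fin 4 × Fin n := (σ4 v.1, v.2)

lemma S_invol (v : Fin 4 × Fin n) : S n (S n v) = v := by
  simp [S, σ4_invol]

lemma S_ne (v : Fin 4 × Fin n) : S n v ≠ v := fun h => σ4_ne v.1 (congrArg Prod.fst h)

lemma not_adj_σ4 (i : Fin 4) : ¬ (pathGraph 4).Adj i (σ4 i) := by
  have h := i.isLt
  rw [pathGraph_adj, σ4_val]
  omega

lemma adj_σ4_cases {r a : Fin 4} (h : (pathGraph 4).Adj r (σ4 a)) :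
    (pathGraph 4).Adj r a ∨ (pathGraph 4).Adj (σ4 r) a := by
  have hr := r.isLt
  have ha := a.isLt
  rw [pathGraph_adj, σ4_val] at h
  rw [pathGraph_adj, pathGraph_adj, σ4_val]
  omega

/-- The symmetry invariant that Alice maintains. -/
def GInv (c : Fin 4 × Fin n → Option (Fin 4)) : Prop := ∀ v, c (S n v) = c v

lemma aliceResponse {c : Fin 4 × Fin n → Option (Fin 4)} (hInv : GInv c)
    {v : Fin 4 × Fin n} {col : Fin 4}
    (hm : validMove (pathGraph 4 □ pathGraph n) c v col) :
    validMove (pathGraph 4 □ pathGraph n) (Function.update c v (some col)) (S n v) col := by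
  obtain ⟨hv, hnb⟩ := hm
  constructor
  · rw [Function.update_of_ne (S_ne v), hInv v]
    exact hv
  · intro u hu
    rcases boxProd_adj.mp hu with ⟨hrow, hcol⟩ | ⟨hcoladj, hroweq⟩
    · -- `u` is a row-neighbor of `S n v` in the same column
      have hune : u ≠ v := by
        intro h
        rw [h] at hrow
        exact not_adj_σ4 v.1 hrow
      rw [Function.update_of_ne hune]
      rcases adj_σ4_cases hrow with h1 | h2
      · exact hnb u (boxProd_adj.mpr (Or.inl ⟨h1, hcol⟩))
      · rw [← hInv u]
        exact hnb (S n u) (boxProd_adj.mpr (Or.inl ⟨h2, hcol⟩))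
    · -- `u` is a column-neighbor of `S n v`
      have hune : u ≠ v := by
        intro h
        rw [h] at hroweq
        exact σ4_ne v.1 hroweq.symm
      rw [Function.update_of_ne hune, ← hInv u]
      refine hnb (S n u) (boxProd_adj.mpr (Or.inr ⟨hcoladj, ?_⟩))
      show σ4 u.1 = v.1
      rw [hroweq]
      exact σ4_invol v.1

lemma inv_update {c : Fin 4 × Fin n → Option (Fin 4)} (hInv : GInv c)
    (v : Fin 4 × Fin n) (col : Fin 4) :
    GInv (Function.update (Function.update c v (some col)) (S n v) (some col)) := by
  intro w
  have e1 : (S n w = S n v) ↔ (w = v) := by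
    constructor
    · intro h
      have := congrArg (S n) h
      rwa [S_invol, S_invol] at this
    · intro h; rw [h]
  have e2 : (S n w = v) ↔ (w = S n v) := by
    constructor
    · intro h
      have := congrArg (S n) h
      rwa [S_invol] at this
    · intro h; rw [h, S_invol]
  simp only [Function.update_apply]
  by_cases h1 : w = v <;> by_cases h2 : w = S n v <;>
    simp [e1, e2, h1, h2, hInv w, S_invol]

lemma exists_colour (a b d : Option (Fin 4)) :
    ∃ col : Fin 4, a ≠ some col ∧ b ≠ some col ∧ d ≠ some col := by
  revert a b d; decide

lemma exists_valid {c : Fin 4 × Fin n → Option (Fin 4)} (hInv : GInv c)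
    (h : ¬ allColored c) : ∃ v col, validMove (pathGraph 4 □ pathGraph n) c v col := by
  simp only [allColored, not_forall, not_not] at h
  obtain ⟨v0, hv0⟩ := h
  -- find an uncolored vertex in row 0 or row 3
  obtain ⟨w, hw, hw1⟩ : ∃ w : Fin 4 × Fin n, c w = none ∧ (w.1.val = 0 ∨ w.1.val = 3) := by
    by_cases h01 : v0.1.val = 0 ∨ v0.1.val = 3
    · exact ⟨v0, hv0, h01⟩
    · refine ⟨S n v0, by rw [hInv v0]; exact hv0, ?_⟩
      have := v0.1.isLt
      show (σ4 v0.1).val = 0 ∨ (σ4 v0.1).val = 3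
      rw [σ4_val]
      omega
  -- its at most three neighbors
  set A : Fin 4 × Fin n := (⟨min (w.1.val + 1) 2, by omega⟩, w.2) with hA
  set B : Fin 4 × Fin n := (w.1, ⟨w.2.val - 1, by have := w.2.isLt; omega⟩) with hB
  set C : Fin 4 × Fin n :=
    (w.1, if h : w.2.val + 1 < n then (⟨w.2.val + 1, h⟩ : Fin n) else w.2) with hC
  have hclass : ∀ u, (pathGraph 4 □ pathGraph n).Adj u w → u = A ∨ u = B ∨ u = C := by
    intro u hu
    rcases boxProd_adj.mp hu with ⟨hrow, hcol⟩ | ⟨hcoladj, hroweq⟩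
    · left
      have h4 := u.1.isLt
      rw [pathGraph_adj] at hrow
      refine Prod.ext_iff.mpr ⟨Fin.ext ?_, hcol⟩
      show u.1.val = min (w.1.val + 1) 2
      omega
    · rw [pathGraph_adj] at hcoladj
      rcases hcoladj with h1 | h2
      · right; left
        refine Prod.ext_iff.mpr ⟨hroweq, Fin.ext ?_⟩
        show u.2.val = w.2.val - 1
        omega
      · right; right
        have hlt : w.2.val + 1 < n := by have := u.2.isLt; omega
        refine Prod.ext_iff.mpr ⟨hroweq, ?_⟩
        show u.2 = if h : w.2.val + 1 < n then (⟨w.2.val + 1, h⟩ : Fin n) else w.2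
        rw [dif_pos hlt]
        exact Fin.ext h2.symm
  obtain ⟨col, hca, hcb, hcc⟩ := exists_colour (c A) (c B) (c C)
  refine ⟨w, col, hw, fun u hu => ?_⟩
  rcases hclass u hu with rfl | rfl | rfl
  exacts [hca, hcb, hcc]

/-- The set of uncolored vertices. -/
def uncolored (c : Fin 4 × Fin n → Option (Fin 4)) : Finset (Fin 4 × Fin n) :=
  Finset.univ.filter (fun v => c v = none)

lemma alice_wins_aux : ∀ (N : ℕ) (c : Fin 4 × Fin n → Option (Fin 4)), GInv c →
    (uncolored c).card ≤ N → AliceWins (pathGraph 4 □ pathGraph n) 4 false c := by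
  intro N
  induction N with
  | zero =>
    intro c hInv hcard
    refine AliceWins.finished _ _ (fun v hv => ?_)
    have hmem : v ∈ uncolored c := by simp [uncolored, hv]
    have := Finset.card_pos.mpr ⟨v, hmem⟩
    omega
  | succ N ih =>
    intro c hInv hcard
    by_cases hall : allColored c
    · exact AliceWins.finished _ _ hall
    · refine AliceWins.bobTurn c (exists_valid hInv hall) ?_
      intro v col hm
      refine AliceWins.aliceMove _ (S n v) col (aliceResponse hInv hm) ?_
      apply ih _ (inv_update hInv v col)
      have hsubset : uncolored
          (Function.update (Function.update c v (some col)) (S n v) (some col)) ⊆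
          uncolored c := by
        intro u hu
        simp only [uncolored, Finset.mem_filter, Finset.mem_univ, true_and] at hu ⊢
        by_cases h1 : u = S n v
        · rw [h1, Function.update_self] at hu; exact absurd hu (by simp)
        · rw [Function.update_of_ne h1] at hu
          by_cases h2 : u = v
          · rw [h2, Function.update_self] at hu; exact absurd hu (by simp)
          · rwa [Function.update_of_ne h2] at hu
      have hss : uncolored
          (Function.update (Function.update c v (some col)) (S n v) (some col)) ⊂
          uncolored c := by
        rw [Finset.ssubset_iff_of_subset hsubset]
        refine ⟨v, by simp [uncolored, hm.1], ?_⟩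
        simp only [uncolored, Finset.mem_filter, Finset.mem_univ, true_and]
        rw [Function.update_of_ne (Ne.symm (S_ne v)), Function.update_self]
        simp
      have := Finset.card_lt_card hss
      omega

end GridGameAux

/-- For every `n ≥ 1`, Alice has a winning strategy in the Bob-start
`4`-coloring game on the `4 × n` grid graph `P₄ □ Pₙ`; that is,
`χ_g^B(P₄ □ Pₙ) ≤ 4`. -/
theorem bobStartGameChromaticNumber_grid_le_four (n : ℕ) (hn : 1 ≤ n) :
    AliceWins (pathGraph 4 □ pathGraph n) 4 false (fun _ => none) ∧
      bobStartGameChromaticNumber (pathGraph 4 □ pathGraph n) ≤ 4 := by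
  have h1 : AliceWins (pathGraph 4 □ pathGraph n) 4 false (fun _ => none) :=
    GridGameAux.alice_wins_aux _ _ (fun _ => rfl) le_rfl
  exact ⟨h1, Nat.sInf_le h1⟩
end

section
/- For every natural number n ≥ 3, Alice has a winning strategy in the Bob-start 4-coloring game on the 4×n cylinder graph, i.e., χ_g^B(P_4 □ C_n) ≤ 4. (Her strategy: whenever Bob colors the vertex in row a of some column j with color c, Alice colors the vertex in row b of the same column j with |a − b| = 2 with the same color c.) -/
open SimpleGraph

section CylAux

/-- The pairing map: row `a`, column `j` maps to row `a+2 (mod 4)`, column `j`. -/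
def prCyl {n : ℕ} (v : Fin 4 × Fin n) : Fin 4 × Fin n := (v.1 + 2, v.2)

lemma prCyl_prCyl {n : ℕ} (v : Fin 4 × Fin n) : prCyl (prCyl v) = v := by
  have h : ∀ a : Fin 4, a + 2 + 2 = a := by decide
  simp [prCyl, h]

lemma prCyl_ne {n : ℕ} (v : Fin 4 × Fin n) : prCyl v ≠ v := by
  have h : ∀ a : Fin 4, a + 2 ≠ a := by decide
  intro hh
  exact h v.1 (congrArg Prod.fst hh)

lemma not_adj_prCyl {n : ℕ} (v : Fin 4 × Fin n) :
    ¬ (pathGraph 4 □ cycleGraph n).Adj v (prCyl v) := by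
  rw [boxProd_adj]
  rintro (⟨hp, _⟩ | ⟨hc, he⟩)
  · rw [pathGraph_adj] at hp
    revert hp
    have h : ∀ a : Fin 4, ¬ (a.val + 1 = (a + 2).val ∨ (a + 2).val + 1 = a.val) := by decide
    exact h v.1
  · exact (cycleGraph n).irrefl hc

lemma adj_prCyl {n : ℕ} (v u : Fin 4 × Fin n)
    (h : (pathGraph 4 □ cycleGraph n).Adj u (prCyl v)) :
    (pathGraph 4 □ cycleGraph n).Adj u v ∨ (pathGraph 4 □ cycleGraph n).Adj (prCyl u) v := by
  rw [boxProd_adj] at h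
  rcases h with ⟨hp, he⟩ | ⟨hc, he⟩
  · rw [pathGraph_adj] at hp
    have key : ∀ a b : Fin 4, (b.val + 1 = (a + 2).val ∨ (a + 2).val + 1 = b.val) →
        ((b.val + 1 = a.val ∨ a.val + 1 = b.val) ∨
          ((b + 2).val + 1 = a.val ∨ a.val + 1 = (b + 2).val)) := by decide
    rcases key v.1 u.1 hp with hk | hk
    · left
      rw [boxProd_adj]; left
      exact ⟨pathGraph_adj.mpr hk, he⟩
    · right
      rw [boxProd_adj]; left
      exact ⟨pathGraph_adj.mpr hk, he⟩
  · right
    rw [boxProd_adj]; right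
    have h4 : ∀ a : Fin 4, a + 2 + 2 = a := by decide
    refine ⟨hc, ?_⟩
    show u.1 + 2 = v.1
    simp only [prCyl] at he
    rw [he]
    exact h4 v.1

/-- A row representative covering the vertical neighbors. -/
def rowRep : Fin 4 → Fin 4 := ![1, 0, 1, 2]

lemma cycle_adj_cases {m : ℕ} {j' j : Fin (m + 3)}
    (h : (cycleGraph (m + 3)).Adj j' j) : j' = j + 1 ∨ j' = j - 1 := by
  have h' : (cycleGraph ((m + 1) + 2)).Adj j' j := h
  rw [cycleGraph_adj] at h'
  rcases h' with h1 | h1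
  · left; exact sub_eq_iff_eq_add'.mp h1
  · right
    have hj : j = j' + 1 := sub_eq_iff_eq_add'.mp h1
    simp [hj]

/-- In a `prCyl`-symmetric partial coloring, the colors of the neighbors of `v`
are covered by three representatives. -/
lemma cover_three {m : ℕ} (c : Fin 4 × Fin (m + 3) → Option (Fin 4))
    (hsym : ∀ w, c (prCyl w) = c w) (v u : Fin 4 × Fin (m + 3))
    (h : (pathGraph 4 □ cycleGraph (m + 3)).Adj u v) :
    c u = c (rowRep v.1, v.2) ∨ c u = c (v.1, v.2 + 1) ∨ c u = c (v.1, v.2 - 1) := by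
  rw [boxProd_adj] at h
  rcases h with ⟨hp, he⟩ | ⟨hc, he⟩
  · rw [pathGraph_adj] at hp
    have key : ∀ a b : Fin 4, (b.val + 1 = a.val ∨ a.val + 1 = b.val) →
        (b = rowRep a ∨ b = rowRep a + 2) := by decide
    rcases key v.1 u.1 hp with hk | hk
    · left
      have hu : u = (rowRep v.1, v.2) := Prod.ext hk he
      rw [hu]
    · left
      have hu : u = prCyl (rowRep v.1, v.2) := Prod.ext hk he
      rw [hu, hsym]
  · rcases cycle_adj_cases hc with hk | hk
    · right; left
      have hu : u = (v.1, v.2 + 1) := Prod.ext he hk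
      rw [hu]
    · right; right
      have hu : u = (v.1, v.2 - 1) := Prod.ext he hk
      rw [hu]

lemma exists_free_color : ∀ o1 o2 o3 : Option (Fin 4),
    ∃ col : Fin 4, o1 ≠ some col ∧ o2 ≠ some col ∧ o3 ≠ some col := by decide

lemma alice_main (m : ℕ) : ∀ (N : ℕ) (c : Fin 4 × Fin (m + 3) → Option (Fin 4)),
    (Finset.univ.filter (fun v => c v = none)).card ≤ N →
    (∀ v, c (prCyl v) = c v) →
    AliceWins (pathGraph 4 □ cycleGraph (m + 3)) 4 false c := by
  intro N
  induction N with
  | zero =>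
    intro c hcard hsym
    refine AliceWins.finished _ _ ?_
    intro v hv
    have hvmem : v ∈ Finset.univ.filter (fun v => c v = none) := by simp [hv]
    have := Finset.card_pos.mpr ⟨v, hvmem⟩
    omega
  | succ N ih =>
    intro c hcard hsym
    by_cases hall : allColored c
    · exact AliceWins.finished _ _ hall
    · have exv : ∀ w : Fin 4 × Fin (m + 3), c w = none →
          ∃ col, validMove (pathGraph 4 □ cycleGraph (m + 3)) c w col := by
        intro w hw
        obtain ⟨col, h1, h2, h3⟩ := exists_free_color
          (c (rowRep w.1, w.2)) (c (w.1, w.2 + 1)) (c (w.1, w.2 - 1))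
        refine ⟨col, hw, fun u hu hcu => ?_⟩
        rcases cover_three c hsym w u hu with h | h | h
        · exact h1 (h ▸ hcu)
        · exact h2 (h ▸ hcu)
        · exact h3 (h ▸ hcu)
      obtain ⟨v, hv⟩ : ∃ v, c v = none := by
        unfold allColored at hall; push_neg at hall
        exact hall
      obtain ⟨col0, hcol0⟩ := exv v hv
      refine AliceWins.bobTurn _ ⟨v, col0, hcol0⟩ ?_
      intro w col hm
      have hw : c w = none := hm.1
      have hprw : c (prCyl w) = none := by rw [hsym w]; exact hw
      set c1 := Function.update c w (some col) with hc1
      have hvalid : validMove (pathGraph 4 □ cycleGraph (m + 3)) c1 (prCyl w) col := by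
        constructor
        · rw [hc1, Function.update_of_ne (prCyl_ne w)]
          exact hprw
        · intro u hu hcu
          have hune : u ≠ w := by
            rintro rfl
            exact not_adj_prCyl u hu
          rw [hc1, Function.update_of_ne hune] at hcu
          rcases adj_prCyl w u hu with h | h
          · exact hm.2 u h hcu
          · exact hm.2 (prCyl u) h (by rw [hsym u]; exact hcu)
      refine AliceWins.aliceMove _ _ _ hvalid ?_
      set c2 := Function.update c1 (prCyl w) (some col) with hc2
      have val_c2 : ∀ x, c2 x =
          if x = prCyl w then some col else if x = w then some col else c x := by
        intro x
        rw [hc2, hc1, Function.update_apply, Function.update_apply]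
      have hsym2 : ∀ u, c2 (prCyl u) = c2 u := by
        intro u
        rw [val_c2, val_c2]
        by_cases h1 : u = w
        · subst h1
          rw [if_pos rfl, if_neg (Ne.symm (prCyl_ne u)), if_pos rfl]
        · by_cases h2 : u = prCyl w
          · subst h2
            rw [prCyl_prCyl, if_neg (Ne.symm (prCyl_ne w)), if_pos rfl, if_pos rfl]
          · have e1 : prCyl u ≠ prCyl w := fun hh =>
              h1 (by rw [← prCyl_prCyl u, hh, prCyl_prCyl])
            have e2 : prCyl u ≠ w := fun hh => h2 (by rw [← prCyl_prCyl u, hh])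
            rw [if_neg e1, if_neg e2, if_neg h2, if_neg h1, hsym u]
      refine ih c2 ?_ hsym2
      have hset : Finset.univ.filter (fun x => c2 x = none) =
          ((Finset.univ.filter (fun x => c x = none)).erase w).erase (prCyl w) := by
        ext x
        simp only [Finset.mem_filter, Finset.mem_univ, true_and, Finset.mem_erase]
        rw [val_c2]
        by_cases h1 : x = prCyl w
        · simp [h1]
        · by_cases h2 : x = w
          · simp [h1, h2]
          · simp [h1, h2]
      rw [hset]
      have hwmem : w ∈ Finset.univ.filter (fun x => c x = none) := by simp [hw]
      have hprmem : prCyl w ∈ (Finset.univ.filter (fun x => c x = none)).erase w := by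
        simp [Finset.mem_erase, prCyl_ne w, hprw]
      rw [Finset.card_erase_of_mem hprmem, Finset.card_erase_of_mem hwmem]
      omega

end CylAux

/-- For every `n ≥ 3`, Alice has a winning strategy in the Bob-start
`4`-coloring game on the `4 × n` cylinder graph `P₄ □ Cₙ`; that is,
`χ_g^B(P₄ □ Cₙ) ≤ 4`. -/
theorem bobStartGameChromaticNumber_cylinder_le_four (n : ℕ) (hn : 3 ≤ n) :
    AliceWins (pathGraph 4 □ cycleGraph n) 4 false (fun _ => none) ∧
      bobStartGameChromaticNumber (pathGraph 4 □ cycleGraph n) ≤ 4 :=  by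
  obtain ⟨m, rfl⟩ : ∃ m, n = m + 3 := ⟨n - 3, by omega⟩
  have h1 : AliceWins (pathGraph 4 □ cycleGraph (m + 3)) 4 false (fun _ => none) :=
    alice_main m _ (fun _ => none) le_rfl (fun v => rfl)
  exact ⟨h1, Nat.sInf_le h1⟩
end
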